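/- For n ≥ 3, the vertex connectivity of the commuting graph Δ(B_n) is n(n−2); in particular, between any two distinct vertices there exist at least n(n−2) internally disjoint paths. -/

import Mathlib

/-- Multiplication of nonzero elements of the Brandt semigroup `B_n`:
`(i,j)·(k,l) = (i,l)` if `j = k`, and `0` (here `none`) otherwise. -/
def brandtMul {n : ℕ} (x y : Fin n × Fin n) : Option (Fin n × Fin n) :=
  if x.2 = y.1 then some (x.1, y.2) else none

/-- The commuting graph of the Brandt semigroup `B_n`. -/
def brandtGraph (n : ℕ) : SimpleGraph (Fin n × Fin n) where
  Adj x y := x ≠ y ∧ brandtMul x y = brandtMul y x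
  symm := ⟨by intro x y h; exact ⟨h.1.symm, h.2.symm⟩⟩
  loopless := ⟨by intro x h; exact h.1 rfl⟩

instance {n : ℕ} : DecidableRel (brandtGraph n).Adj :=
  fun x y => decidable_of_iff (x ≠ y ∧ brandtMul x y = brandtMul y x) Iff.rfl

/-! Read `(i, j)` as an arrow `i → j`: distinct arrows commute in `B_n` exactly when neither
composes with the other. Removing the neighbourhood of `(i, j)`, `i ≠ j`, which has
`(n - 1)² - 1 = n(n - 2)` elements, separates `(i, j)` from `(j, j)`. Conversely, if removing `S`
leaves two nonempty parts `A`, `B` with no edges between them, every arrow of `A` composes with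
every arrow of `B` in some order. The arrows composing with a fixed arrow form a cross of `2n - 1`
arrows, and those composing with two distinct arrows are the graph of a function of their row or
of their column, so there are at most `n` of them. Either way `|A| + |B| ≤ 2n`, so
`|S| ≥ n² - 2n`. -/

theorem Set.ncard_le_of_subset_range {α : Type*} {n : ℕ} {s : Set α} (f : Fin n → α)
    (h : s ⊆ Set.range f) : s.ncard ≤ n :=
  (Set.ncard_le_ncard h).trans <| by
    rw [← Nat.card_coe_set_eq]
    exact (Finite.card_range_le f).trans_eq (Nat.card_fin n)

namespace SimpleGraph

variable {V : Type*} {G : SimpleGraph V}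

theorem not_connected_induce_compl_neighborSet {u v : V} (huv : u ≠ v) (hadj : ¬ G.Adj u v) :
    ¬ (G.induce (G.neighborSet u)ᶜ).Connected := by
  intro h
  have hu : u ∈ (G.neighborSet u)ᶜ := G.irrefl
  refine not_reachable_of_neighborSet_left_eq_empty (u := ⟨u, hu⟩) (v := ⟨v, hadj⟩)
    (by simpa [Subtype.ext_iff] using huv) ?_ (h.preconnected _ _)
  ext ⟨w, hw⟩
  simpa using hw

theorem exists_partition_of_not_connected_induce {s : Set V} (hs : s.Nonempty)
    (h : ¬ (G.induce s).Connected) :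
    ∃ A B : Set V, A.Nonempty ∧ B.Nonempty ∧ Disjoint A B ∧ A ∪ B = s ∧
      ∀ x ∈ A, ∀ y ∈ B, ¬ G.Adj x y := by
  have : Nonempty s := hs.to_subtype
  obtain ⟨a, b, hab⟩ : ∃ a b : s, ¬ (G.induce s).Reachable a b := by
    by_contra! hall
    exact h ⟨hall⟩
  let A : Set V := {x | ∃ hx : x ∈ s, (G.induce s).Reachable a ⟨x, hx⟩}
  refine ⟨A, s \ A, ⟨a, a.2, .rfl⟩, ⟨b, b.2, fun ⟨_, hr⟩ => hab hr⟩, Set.disjoint_sdiff_right,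
    Set.union_sdiff_cancel fun x hx => hx.1, ?_⟩
  rintro x ⟨hxs, hax⟩ y ⟨hys, hyA⟩ hxy
  have hxy' : (G.induce s).Adj ⟨x, hxs⟩ ⟨y, hys⟩ := hxy
  exact hyA ⟨hys, hax.trans hxy'.reachable⟩

end SimpleGraph

section Brandt

variable {n : ℕ}

theorem brandtGraph_adj_iff {x y : Fin n × Fin n} :
    (brandtGraph n).Adj x y ↔ x ≠ y ∧ x.2 ≠ y.1 ∧ y.2 ≠ x.1 := by
  simp only [brandtGraph, brandtMul]
  split_ifs <;> grind

theorem brandtGraph_neighborSet (x : Fin n × Fin n) :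
    (brandtGraph n).neighborSet x = ({x.2}ᶜ ×ˢ {x.1}ᶜ) \ {x} := by
  ext y
  simp only [SimpleGraph.mem_neighborSet, brandtGraph_adj_iff]
  grind

theorem ncard_brandtGraph_neighborSet {x : Fin n × Fin n} (hx : x.1 ≠ x.2) :
    ((brandtGraph n).neighborSet x).ncard = n * (n - 2) := by
  have hmem : x ∈ ({x.2}ᶜ ×ˢ {x.1}ᶜ : Set (Fin n × Fin n)) := by simp [hx, Ne.symm hx]
  rw [brandtGraph_neighborSet, Set.ncard_sdiff_singleton_of_mem hmem, Set.ncard_prod,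
    Set.ncard_compl, Set.ncard_compl]
  simp only [Nat.card_eq_fintype_card, Fintype.card_fin, Set.ncard_singleton]
  rcases n with _ | _ | n
  · simp
  · simp
  · rw [show n + 2 - 1 = n + 1 by omega, show n + 2 - 2 = n by omega]
    exact Nat.sub_eq_of_eq_add (by ring)

theorem ncard_add_one_le_of_forall_composable {A : Set (Fin n × Fin n)} (y : Fin n × Fin n)
    (hA : ∀ x ∈ A, x.2 = y.1 ∨ y.2 = x.1) : A.ncard + 1 ≤ 2 * n := by
  set column := Set.range fun i : Fin n => (i, y.1)
  set row := Set.range fun j : Fin n => (y.2, j)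
  have hcolumn : column.ncard = n := by
    rw [Set.ncard_range_of_injective fun i j h => (Prod.ext_iff.1 h).1, Nat.card_fin]
  have hrow : row.ncard = n := by
    rw [Set.ncard_range_of_injective fun i j h => (Prod.ext_iff.1 h).2, Nat.card_fin]
  have hsub : A ⊆ column ∪ row := fun x hx => by
    rcases hA x hx with h | h
    · exact Or.inl ⟨x.1, by rw [← h]⟩
    · exact Or.inr ⟨x.2, by rw [h]⟩
  have hcorner : (column ∩ row).Nonempty := ⟨(y.2, y.1), ⟨y.2, rfl⟩, ⟨y.1, rfl⟩⟩
  calc A.ncard + 1 ≤ (column ∪ row).ncard + (column ∩ row).ncard :=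
        add_le_add (Set.ncard_le_ncard hsub) hcorner.ncard_pos
    _ = 2 * n := by rw [Set.ncard_union_add_ncard_inter, hcolumn, hrow, two_mul]

theorem ncard_le_of_forall_composable_of_ne {A : Set (Fin n × Fin n)} {y y' : Fin n × Fin n}
    (hne : y ≠ y')
    (hA : ∀ x ∈ A, (x.2 = y.1 ∨ y.2 = x.1) ∧ (x.2 = y'.1 ∨ y'.2 = x.1)) : A.ncard ≤ n := by
  by_cases h2 : y.2 = y'.2
  · refine Set.ncard_le_of_subset_range (fun j => (if j = y.1 then y'.2 else y.2, j))
      fun x hx => ⟨x.2, Prod.ext ?_ rfl⟩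
    have := hA x hx
    dsimp only
    split_ifs <;> grind
  · refine Set.ncard_le_of_subset_range (fun i => (i, if i = y.2 then y'.1 else y.1))
      fun x hx => ⟨x.1, Prod.ext rfl ?_⟩
    have := hA x hx
    dsimp only
    split_ifs <;> grind

theorem ncard_add_ncard_le_of_forall_composable {A B : Set (Fin n × Fin n)}
    (hA : A.Nonempty) (hB : B.Nonempty) (h : ∀ x ∈ A, ∀ y ∈ B, x.2 = y.1 ∨ y.2 = x.1) :
    A.ncard + B.ncard ≤ 2 * n := by
  rcases le_or_gt B.ncard 1 with hB1 | hB1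
  · obtain ⟨y, hy⟩ := hB
    have := ncard_add_one_le_of_forall_composable y fun x hx => h x hx y hy
    omega
  rcases le_or_gt A.ncard 1 with hA1 | hA1
  · obtain ⟨x, hx⟩ := hA
    have := ncard_add_one_le_of_forall_composable x fun y hy => (h x hx y hy).symm
    omega
  obtain ⟨y, y', hy, hy', hyy'⟩ := (Set.one_lt_ncard_iff B.toFinite).1 hB1
  obtain ⟨x, x', hx, hx', hxx'⟩ := (Set.one_lt_ncard_iff A.toFinite).1 hA1
  have hAn := ncard_le_of_forall_composable_of_ne hyy' fun z hz => ⟨h z hz y hy, h z hz y' hy'⟩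
  have hBn := ncard_le_of_forall_composable_of_ne hxx' fun z hz =>
    ⟨(h x hx z hz).symm, (h x' hx' z hz).symm⟩
  omega

theorem ncard_le_of_not_connected_induce_brandtGraph {s : Set (Fin n × Fin n)}
    (h : ¬ ((brandtGraph n).induce s).Connected) : s.ncard ≤ 2 * n := by
  rcases s.eq_empty_or_nonempty with rfl | hs
  · simp
  obtain ⟨A, B, hA, hB, hdisj, rfl, hnadj⟩ :=
    SimpleGraph.exists_partition_of_not_connected_induce hs h
  rw [Set.ncard_union_eq hdisj]
  refine ncard_add_ncard_le_of_forall_composable hA hB fun x hx y hy => ?_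
  have hxy : x ≠ y := hdisj.ne_of_mem hx hy
  by_contra! hcomm
  exact hnadj x hx y hy (brandtGraph_adj_iff.2 ⟨hxy, hcomm⟩)

end Brandt

theorem brandt_vertex_connectivity (n : ℕ) (hn : 3 ≤ n) :
    (∃ S : Set (Fin n × Fin n), S.ncard = n * (n - 2) ∧
      ¬ ((brandtGraph n).induce Sᶜ).Connected) ∧
    ∀ S : Set (Fin n × Fin n),
      ¬ ((brandtGraph n).induce Sᶜ).Connected → n * (n - 2) ≤ S.ncard := by
  let i : Fin n := ⟨0, by omega⟩
  let j : Fin n := ⟨1, by omega⟩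
  have hij : i ≠ j := by simp [i, j, Fin.ext_iff]
  refine ⟨⟨_, ncard_brandtGraph_neighborSet (x := (i, j)) hij,
    SimpleGraph.not_connected_induce_compl_neighborSet (v := (j, j)) (by simp [hij])
      (by simp [brandtGraph_adj_iff])⟩, fun S hS => ?_⟩
  have hcompl := ncard_le_of_not_connected_induce_brandtGraph hS
  have hcard := Set.ncard_add_ncard_compl S
  rw [Nat.card_eq_fintype_card, Fintype.card_prod, Fintype.card_fin] at hcard
  rw [Nat.mul_sub]
  omega
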